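/- There is a bijection between the set of properly-marked {L,R}-words of length n-1 and the set of subgraphs of the path graph P_n whose vertex set contains the vertex n; under this bijection the number of marked L-elements equals the number of edges of the subgraph, and the number of unmarked L-elements equals the number of connected components minus one. -/

import Mathlib

/-- The alphabet {Lᵘ, Lᵐ, R} for properly-marked {L,R}-words. -/
inductive PMLetter
  | Lu : PMLetter
  | Lm : PMLetter
  | R : PMLetter
deriving DecidableEq

/-- A word is properly marked if no occurrence of Lᵐ is immediately followed by R. -/
def ProperlyMarked (w : List PMLetter) : Prop :=
  w.Chain' (fun a b => a = PMLetter.Lm → b ≠ PMLetter.R)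

/-!
Position `i < m` of a word of length `m` describes vertex `i` of the path on `m + 1` vertices
(present unless the letter is `R`) together with the edge `{i, i + 1}` (present iff the letter
is `Lᵐ`); the last vertex carries no letter and is always present. Being properly marked says
exactly that the right end of an edge is a vertex, so this is a bijection, and the `Lᵐ` are the
edges. The components are intervals, counted by their right ends: the last vertex and the
positions marked `Lᵘ`.
-/

open SimpleGraph PMLetter

theorem List.count_ofFn {α : Type*} [DecidableEq α] {m : ℕ} (f : Fin m → α) (a : α) :
    (List.ofFn f).count a = {i | f i = a}.ncard := by
  rw [← Multiset.coe_count, ← Fin.univ_val_map, Multiset.count_map, Set.ncard_eq_toFinset_card',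
    Set.toFinset_ofPred, Finset.card_def, Finset.filter_val]
  simp only [eq_comm]

namespace SimpleGraph.Subgraph

variable {n m : ℕ}

theorem ncard_edgeSet_of_pathGraph (H : (pathGraph (m + 1)).Subgraph) :
    H.edgeSet.ncard = {i : Fin m | H.Adj i.castSucc i.succ}.ncard := by
  have hinj : Function.Injective fun i : Fin m => s(i.castSucc, i.succ) := by
    intro i j hij
    rcases Sym2.eq_iff.mp hij with ⟨h, -⟩ | ⟨h₁, h₂⟩
    · exact Fin.castSucc_injective m h
    · have h₁ := congrArg Fin.val h₁
      have h₂ := congrArg Fin.val h₂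
      simp only [Fin.val_castSucc, Fin.val_succ] at h₁ h₂
      omega
  have hrange : H.edgeSet ⊆ Set.range fun i : Fin m => s(i.castSucc, i.succ) := by
    intro e he
    induction e using Sym2.ind with | _ u v =>
    rw [Subgraph.mem_edgeSet] at he
    rcases pathGraph_adj.mp (H.adj_sub he) with h | h
    · exact ⟨⟨u, by omega⟩, Sym2.eq_iff.mpr (Or.inl ⟨rfl, Fin.ext h⟩)⟩
    · exact ⟨⟨v, by omega⟩, Sym2.eq_iff.mpr (Or.inr ⟨rfl, Fin.ext h⟩)⟩
  rw [← Set.ncard_preimage_of_injective_subset_range hinj hrange]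
  rfl

/-- In a subgraph of a path the components are intervals, and these are their right ends. -/
def rightEnds (H : (pathGraph n).Subgraph) : Set (Fin n) :=
  {v ∈ H.verts | ∀ u, H.Adj v u → u < v}

theorem le_of_reachable_of_mem_rightEnds {H : (pathGraph n).Subgraph} {v : H.verts}
    (hv : (v : Fin n) ∈ rightEnds H) {u : H.verts} (hvu : H.coe.Reachable v u) :
    (u : Fin n) ≤ v := by
  obtain ⟨p⟩ := hvu
  suffices ∀ {a b : H.verts} (p : H.coe.Walk a b), (a : Fin n) ≤ v → (b : Fin n) ≤ v from
    this p le_rfl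
  intro a b p
  induction p with
  | nil => exact id
  | @cons a c b hac _ ih =>
    intro ha
    refine ih (le_of_not_gt fun hvc => ?_)
    have hac : H.Adj a c := hac
    have hav : (a : Fin n) = v := by
      have := pathGraph_adj.mp (H.adj_sub hac)
      rw [Fin.lt_def] at hvc; rw [Fin.le_def] at ha; ext; omega
    exact (hv.2 c (hav ▸ hac)).not_gt hvc

theorem card_connectedComponent_eq_ncard_rightEnds (H : (pathGraph n).Subgraph) :
    Nat.card H.coe.ConnectedComponent = (rightEnds H).ncard := by
  rw [← Nat.card_coe_set_eq]
  refine (Nat.card_eq_of_bijective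
    (fun v : rightEnds H => H.coe.connectedComponentMk ⟨v, v.2.1⟩)
    ⟨fun v v' hvv' => ?_, ConnectedComponent.ind fun a => ?_⟩).symm
  · have hr := ConnectedComponent.exact hvv'
    exact Subtype.ext <| le_antisymm (le_of_reachable_of_mem_rightEnds v'.2 hr.symm)
      (le_of_reachable_of_mem_rightEnds v.2 hr)
  · obtain ⟨v, hav, hmax⟩ := Set.exists_max_image {b | H.coe.Reachable a b}
      (fun b : H.verts => (b : Fin n)) (Set.toFinite _) ⟨a, Reachable.refl a⟩
    refine ⟨⟨v, v.2, fun u hvu => ?_⟩, ConnectedComponent.sound hav.symm⟩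
    have hvu' : H.coe.Adj v ⟨u, H.edge_vert hvu.symm⟩ := hvu
    exact (hmax _ (hav.trans hvu'.reachable)).lt_of_ne (H.adj_sub hvu).ne.symm

section Encoding

variable (H : (pathGraph (m + 1)).Subgraph)

open Classical in
noncomputable def pmLetter (i : Fin m) : PMLetter :=
  if H.Adj i.castSucc i.succ then Lm else if i.castSucc ∈ H.verts then Lu else R

noncomputable def pmWord : List PMLetter := List.ofFn H.pmLetter

variable {H} {i : Fin m}

theorem pmLetter_eq_Lm_iff : H.pmLetter i = Lm ↔ H.Adj i.castSucc i.succ := by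
  unfold pmLetter; split_ifs <;> simp_all

theorem pmLetter_eq_Lu_iff :
    H.pmLetter i = Lu ↔ i.castSucc ∈ H.verts ∧ ¬H.Adj i.castSucc i.succ := by
  unfold pmLetter; split_ifs <;> simp_all

theorem pmLetter_ne_R_iff : H.pmLetter i ≠ R ↔ i.castSucc ∈ H.verts := by
  unfold pmLetter
  split_ifs with hadj hmem
  · simp [H.edge_vert hadj]
  all_goals simp [hmem]

variable (H)

theorem length_pmWord : H.pmWord.length = m := List.length_ofFn

theorem getElem?_pmWord (i : Fin m) : H.pmWord[(i : ℕ)]? = some (H.pmLetter i) := by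
  simp [pmWord]

theorem getElem?_pmWord_eq_some_Lm_iff {u v : Fin (m + 1)} (huv : u.val + 1 = v.val) :
    H.pmWord[u.val]? = some Lm ↔ H.Adj u v := by
  obtain ⟨i, rfl⟩ : ∃ i : Fin m, u = i.castSucc := ⟨⟨u, by omega⟩, rfl⟩
  obtain rfl : v = i.succ := Fin.ext (by simp [← huv])
  rw [Fin.val_castSucc, getElem?_pmWord, Option.some_inj, pmLetter_eq_Lm_iff]

theorem getElem?_pmWord_ne_some_R_iff (h : Fin.last m ∈ H.verts) (v : Fin (m + 1)) :
    H.pmWord[v.val]? ≠ some R ↔ v ∈ H.verts := by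
  induction v using Fin.lastCases with
  | last => simp [pmWord, h]
  | cast i =>
    rw [Fin.val_castSucc, getElem?_pmWord, ne_eq, Option.some_inj, ← ne_eq, pmLetter_ne_R_iff]

theorem properlyMarked_pmWord : ProperlyMarked H.pmWord := by
  refine List.isChain_iff_getElem.mpr fun i hi hLm => ?_
  simp only [pmWord, List.getElem_ofFn] at hLm ⊢
  rw [pmLetter_ne_R_iff]
  exact H.edge_vert (H.adj_symm (pmLetter_eq_Lm_iff.mp hLm))

theorem count_Lm_pmWord : H.pmWord.count Lm = H.edgeSet.ncard := by
  simp only [pmWord, List.count_ofFn, pmLetter_eq_Lm_iff, ncard_edgeSet_of_pathGraph]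

theorem rightEnds_eq_insert_last (h : Fin.last m ∈ H.verts) :
    rightEnds H = insert (Fin.last m) (Fin.castSucc '' {i | H.pmLetter i = Lu}) := by
  ext v
  induction v using Fin.lastCases with
  | last =>
    simp only [Set.mem_insert_iff, true_or, iff_true]
    exact ⟨h, fun u hu => (Fin.le_last u).lt_of_ne (H.adj_sub hu).ne.symm⟩
  | cast i =>
    simp only [rightEnds, Set.mem_ofPred_eq, Set.mem_insert_iff, Fin.castSucc_ne_last, false_or,
      Fin.castSucc_injective m |>.mem_set_image, pmLetter_eq_Lu_iff]
    refine and_congr_right fun _ => ⟨fun hlt hadj => (hlt _ hadj).not_gt Fin.castSucc_lt_succ,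
      fun hnadj u hu => ?_⟩
    rcases pathGraph_adj.mp (H.adj_sub hu) with h | h
    · obtain rfl : u = i.succ := Fin.ext (by simpa using h.symm)
      exact absurd hu hnadj
    · exact Fin.lt_def.mpr (by omega)

theorem count_Lu_pmWord_add_one (h : Fin.last m ∈ H.verts) :
    H.pmWord.count Lu + 1 = Nat.card H.coe.ConnectedComponent := by
  rw [card_connectedComponent_eq_ncard_rightEnds, rightEnds_eq_insert_last H h,
    Set.ncard_insert_of_notMem (by simp [Fin.castSucc_ne_last]),
    Set.ncard_image_of_injective _ (Fin.castSucc_injective m), pmWord, List.count_ofFn]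

end Encoding

end SimpleGraph.Subgraph

namespace ProperlyMarked

variable {w : List PMLetter}

theorem getElem?_succ_ne_some_R (hw : ProperlyMarked w) {i : ℕ} (hLm : w[i]? = some Lm) :
    w[i + 1]? ≠ some R := by
  by_cases hi : i + 1 < w.length
  · rw [List.getElem?_eq_getElem hi, ne_eq, Option.some_inj]
    rw [List.getElem?_eq_getElem (by omega), Option.some_inj] at hLm
    exact List.isChain_iff_getElem.mp hw i hi hLm
  · simp [List.getElem?_eq_none (by omega : w.length ≤ i + 1)]

/-- For a word of length `m` we have `w[m]? = none`, so the vertex `m` is always present. -/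
def toSubgraph (hw : ProperlyMarked w) (m : ℕ) : (pathGraph (m + 1)).Subgraph where
  verts := {v | w[v.val]? ≠ some R}
  Adj u v :=
    (u.val + 1 = v.val ∧ w[u.val]? = some Lm) ∨ (v.val + 1 = u.val ∧ w[v.val]? = some Lm)
  adj_sub h := pathGraph_adj.mpr (h.imp And.left And.left)
  edge_vert := by
    rintro u v (⟨-, h⟩ | ⟨hvu, h⟩)
    · simp [Set.mem_ofPred_eq, h]
    · show w[u.val]? ≠ some R
      exact hvu ▸ hw.getElem?_succ_ne_some_R h
  symm := ⟨fun _ _ h => h.symm⟩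

theorem pmWord_toSubgraph {m : ℕ} (hw : ProperlyMarked w) (hlen : w.length = m) :
    (hw.toSubgraph m).pmWord = w := by
  refine List.ext_getElem (by simp [Subgraph.length_pmWord, hlen]) fun i _ hi => ?_
  let j : Fin m := ⟨i, hlen ▸ hi⟩
  have hadj : (hw.toSubgraph m).Adj j.castSucc j.succ ↔ w[i] = Lm := by
    simp [toSubgraph, j, List.getElem?_eq_getElem hi]
    omega
  have hmem : j.castSucc ∈ (hw.toSubgraph m).verts ↔ w[i] ≠ R := by
    simp [toSubgraph, j, List.getElem?_eq_getElem hi]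
  simp only [Subgraph.pmWord, List.getElem_ofFn]
  cases h : w[i]
  · exact Subgraph.pmLetter_eq_Lu_iff.mpr
      ⟨hmem.mpr (by simp [h]), fun hLm => by simp [hadj.mp hLm] at h⟩
  · exact Subgraph.pmLetter_eq_Lm_iff.mpr (hadj.mpr h)
  · by_contra hR
    exact hmem.mp (Subgraph.pmLetter_ne_R_iff.mp hR) h

end ProperlyMarked

theorem SimpleGraph.Subgraph.toSubgraph_pmWord {m : ℕ} (H : (pathGraph (m + 1)).Subgraph)
    (h : Fin.last m ∈ H.verts) : H.properlyMarked_pmWord.toSubgraph m = H := by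
  ext u v
  · exact H.getElem?_pmWord_ne_some_R_iff h u
  · change (u.val + 1 = v.val ∧ _) ∨ (v.val + 1 = u.val ∧ _) ↔ _
    constructor
    · rintro (⟨huv, h⟩ | ⟨hvu, h⟩)
      · exact (H.getElem?_pmWord_eq_some_Lm_iff huv).mp h
      · exact H.adj_symm ((H.getElem?_pmWord_eq_some_Lm_iff hvu).mp h)
    · intro hadj
      rcases pathGraph_adj.mp (H.adj_sub hadj) with huv | hvu
      · exact Or.inl ⟨huv, (H.getElem?_pmWord_eq_some_Lm_iff huv).mpr hadj⟩
      · exact Or.inr ⟨hvu, (H.getElem?_pmWord_eq_some_Lm_iff hvu).mpr (H.adj_symm hadj)⟩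

noncomputable def pmWordEquivPathSubgraph (m : ℕ) :
    {w : List PMLetter // w.length = m ∧ ProperlyMarked w} ≃
      {H : (pathGraph (m + 1)).Subgraph // Fin.last m ∈ H.verts} where
  toFun w := ⟨w.2.2.toSubgraph m, by simp [ProperlyMarked.toSubgraph, w.2.1]⟩
  invFun H := ⟨H.1.pmWord, H.1.length_pmWord, H.1.properlyMarked_pmWord⟩
  left_inv w := Subtype.ext (w.2.2.pmWord_toSubgraph w.2.1)
  right_inv H := Subtype.ext (H.1.toSubgraph_pmWord H.2)

theorem pm_words_equiv_path_subgraphs (n : ℕ) (hn : 1 ≤ n) :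
    ∃ T : {w : List PMLetter // w.length = n - 1 ∧ ProperlyMarked w} ≃
        {H : (SimpleGraph.pathGraph n).Subgraph // (⟨n - 1, by omega⟩ : Fin n) ∈ H.verts},
      ∀ w, w.1.count PMLetter.Lm = (T w).1.edgeSet.ncard ∧
        w.1.count PMLetter.Lu = Nat.card (T w).1.coe.ConnectedComponent - 1 := by
  obtain ⟨m, rfl⟩ : ∃ m, n = m + 1 := ⟨n - 1, by omega⟩
  refine ⟨pmWordEquivPathSubgraph m, fun w => ?_⟩
  obtain ⟨H, rfl⟩ := (pmWordEquivPathSubgraph m).symm.surjective w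
  rw [Equiv.apply_symm_apply]
  exact ⟨H.1.count_Lm_pmWord, Nat.eq_sub_of_add_eq (H.1.count_Lu_pmWord_add_one H.2)⟩
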